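/- Let K ≥ 1 be an integer and define Λ_K = sup_{x∈[0,1]} Σ_{α=0}^{K} |P^α(x)| and E_K = sup_{x,y∈[0,1]} |exp(−2πixy) − Σ_{α=0}^{K} exp(−2πi·y·c^α)·P^α(x)|. For m ≥ 1 and bit strings σ_{1:m}, τ_{1:m} ∈ {0,1}^m, define F_m^α(σ_{1:m},τ_{1:m}) = exp(−πi·Σ_{k,l=1}^{m} 2^{−k}·2^{l}·σ_k·τ_l)·exp(−2πi·y_{≤m}·c^α) with y_{≤m} = Σ_{l=1}^{m} 2^{l−m−1}·τ_l, and define the tensors F̃_m recursively by F̃_1 = F_1 and F̃_{m+1}^β(σ_{1:m+1},τ_{1:m+1}) = Σ_{α=0}^{K} F̃_m^α(σ_{1:m},τ_{1:m})·A^{αβ}(σ_{m+1},τ_{m+1}). Then for every m ≥ 1 and every α ∈ {0,…,K}, σ_{1:m}, τ_{1:m} ∈ {0,1}^m, one has |F̃_m^α(σ_{1:m},τ_{1:m}) − F_m^α(σ_{1:m},τ_{1:m})| ≤ E_K · Σ_{p=0}^{m−2} Λ_K^p (with the empty sum equal to 0 when m = 1). -/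

import Mathlib

/-- The Chebyshev–Lobatto points on `[0,1]`: `c^α = (1 − cos(πα/K))/2`, `α = 0, …, K`. -/
noncomputable def cheb (K : ℕ) (α : Fin (K + 1)) : ℝ :=
  (1 - Real.cos (Real.pi * ((α : ℕ) : ℝ) / (K : ℝ))) / 2

/-- The Lagrange interpolation basis polynomials for the Chebyshev–Lobatto points,
evaluated at `x`. -/
noncomputable def chebP (K : ℕ) (α : Fin (K + 1)) (x : ℝ) : ℝ :=
  (Lagrange.basis Finset.univ (cheb K) α).eval x

/-- The internal MPO core `A^{αβ}(σ,τ) = P^α((σ+c^β)/2)·exp(−πi(σ+c^β)τ)`. -/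
noncomputable def Acore (K : ℕ) (α β : Fin (K + 1)) (σ τ : Fin 2) : ℂ :=
  ((chebP K α ((((σ : ℕ) : ℝ) + cheb K β) / 2) : ℝ) : ℂ) *
    Complex.exp (-(Real.pi : ℂ) * Complex.I *
      (((((σ : ℕ) : ℝ) + cheb K β : ℝ) : ℂ)) * ((τ : ℕ) : ℂ))

/-- The Lebesgue constant `Λ_K = sup_{x∈[0,1]} Σ_α |P^α(x)|`. -/
noncomputable def Lambda (K : ℕ) : ℝ :=
  sSup ((fun x => ∑ α : Fin (K + 1), |chebP K α x|) '' Set.Icc 0 1)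

/-- The worst-case interpolation error
`E_K = sup_{x,y∈[0,1]} |exp(−2πixy) − Σ_α exp(−2πi y c^α) P^α(x)|`. -/
noncomputable def Eworst (K : ℕ) : ℝ :=
  sSup ((fun p : ℝ × ℝ =>
      ‖(Complex.exp (-2 * (Real.pi : ℂ) * Complex.I * (p.1 : ℂ) * (p.2 : ℂ)) -
        ∑ α : Fin (K + 1),
          Complex.exp (-2 * (Real.pi : ℂ) * Complex.I * (p.2 : ℂ) * ((cheb K α : ℝ) : ℂ)) *
            ((chebP K α p.1 : ℝ) : ℂ))‖) '' (Set.Icc 0 1 ×ˢ Set.Icc 0 1))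

/-- The exact intermediate tensor on `M` sites:
`F_M^α(σ,τ) = exp(−πi Σ_{k,l=1}^M 2^{−k} 2^{l} σ_k τ_l)·exp(−2πi y_{≤M} c^α)` with
`y_{≤M} = Σ_{l=1}^M 2^{l−M−1} τ_l`. -/
noncomputable def FmQ (K M : ℕ) (α : Fin (K + 1)) (σ τ : Fin M → Fin 2) : ℂ :=
  Complex.exp (-(Real.pi : ℂ) * Complex.I *
      ((∑ k : Fin M, ∑ l : Fin M,
        (2 : ℝ) ^ ((l : ℕ) + 1) / (2 : ℝ) ^ ((k : ℕ) + 1) *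
          ((σ k : ℕ) : ℝ) * ((τ l : ℕ) : ℝ) : ℝ) : ℂ)) *
    Complex.exp (-2 * (Real.pi : ℂ) * Complex.I *
      ((∑ l : Fin M,
        (2 : ℝ) ^ ((l : ℕ) + 1) / (2 : ℝ) ^ (M + 1) * ((τ l : ℕ) : ℝ) : ℝ) : ℂ) *
      ((cheb K α : ℝ) : ℂ))

/-- The recursively constructed MPO tensors: `F̃_1 = F_1` and
`F̃_{m+1}^β(σ,τ) = Σ_α F̃_m^α(σ_{1:m},τ_{1:m})·A^{αβ}(σ_{m+1},τ_{m+1})`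
(here the ℕ-index `m` corresponds to `m+1` sites). -/
noncomputable def Ftilde (K : ℕ) :
    (m : ℕ) → Fin (K + 1) → (Fin (m + 1) → Fin 2) → (Fin (m + 1) → Fin 2) → ℂ
  | 0, β, σ, τ => FmQ K 1 β σ τ
  | m + 1, β, σ, τ =>
      ∑ α : Fin (K + 1),
        Ftilde K m α (fun i => σ i.castSucc) (fun i => τ i.castSucc) *
          Acore K α β (σ (Fin.last (m + 1))) (τ (Fin.last (m + 1)))

/-! ### Auxiliary machinery -/

lemma cheb_mem (K : ℕ) (α : Fin (K+1)) : cheb K α ∈ Set.Icc (0:ℝ) 1 := by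
  unfold cheb
  constructor
  · have := Real.cos_le_one (Real.pi * ((α : ℕ) : ℝ) / (K : ℝ)); linarith
  · have := Real.neg_one_le_cos (Real.pi * ((α : ℕ) : ℝ) / (K : ℝ)); linarith

lemma chebP_cont (K : ℕ) (α : Fin (K+1)) : Continuous (chebP K α) := by
  unfold chebP; exact Polynomial.continuous _

lemma Lambda_ge (K : ℕ) (x : ℝ) (hx : x ∈ Set.Icc (0:ℝ) 1) :
    ∑ α : Fin (K + 1), |chebP K α x| ≤ Lambda K := by
  apply le_csSup
  · apply IsCompact.bddAbove_image isCompact_Icc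
    exact Continuous.continuousOn
      (continuous_finset_sum _ fun a _ => (chebP_cont K a).abs)
  · exact Set.mem_image_of_mem _ hx

lemma Lambda_nonneg (K : ℕ) : 0 ≤ Lambda K := by
  refine le_trans ?_ (Lambda_ge K 0 (by norm_num))
  positivity

set_option maxHeartbeats 1000000 in
lemma Eworst_ge (K : ℕ) (x y : ℝ) (hx : x ∈ Set.Icc (0:ℝ) 1) (hy : y ∈ Set.Icc (0:ℝ) 1) :
    ‖Complex.exp (-2 * (Real.pi : ℂ) * Complex.I * (x : ℂ) * (y : ℂ)) -
        ∑ α : Fin (K + 1),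
          Complex.exp (-2 * (Real.pi : ℂ) * Complex.I * (y : ℂ) * ((cheb K α : ℝ) : ℂ)) *
            ((chebP K α x : ℝ) : ℂ)‖ ≤ Eworst K := by
  apply le_csSup
  · apply IsCompact.bddAbove_image (isCompact_Icc.prod isCompact_Icc)
    apply Continuous.continuousOn
    apply continuous_norm.comp
    apply Continuous.sub
    · apply Continuous.cexp
      exact (continuous_const.mul (Complex.continuous_ofReal.comp continuous_fst)).mul
        (Complex.continuous_ofReal.comp continuous_snd)
    · apply continuous_finset_sum
      intro a _
      apply Continuous.mul
      · apply Continuous.cexp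
        exact (continuous_const.mul (Complex.continuous_ofReal.comp continuous_snd)).mul
          continuous_const
      · exact (Complex.continuous_ofReal.comp ((chebP_cont K a).comp continuous_fst))
  · exact ⟨(x, y), Set.mk_mem_prod hx hy, rfl⟩

lemma Eworst_nonneg (K : ℕ) : 0 ≤ Eworst K :=
  le_trans (norm_nonneg _) (Eworst_ge K 0 0 (by norm_num) (by norm_num))

/-- The complex phase `ep t = exp(−πi t)`. -/
noncomputable def ep (t : ℝ) : ℂ := Complex.exp (-(Real.pi:ℂ) * Complex.I * t)

lemma ep_add (a b : ℝ) : ep (a + b) = ep a * ep b := by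
  unfold ep; rw [← Complex.exp_add]
  congr 1
  push_cast
  ring

lemma ep_nat (n : ℕ) : ep (2 * n) = 1 := by
  unfold ep
  have : -(Real.pi:ℂ) * Complex.I * ((2 * n : ℝ) : ℂ) = (-(n:ℤ) : ℤ) * (2 * Real.pi * Complex.I) := by
    push_cast; ring
  rw [this, Complex.exp_int_mul_two_pi_mul_I]

lemma ep_abs (t : ℝ) : ‖ep t‖ = 1 := by
  unfold ep
  rw [Complex.norm_exp]
  norm_num [Complex.mul_re, Complex.I_re, Complex.I_im, Complex.ofReal_re, Complex.ofReal_im]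

/-- The quadratic phase appearing in `FmQ`. -/
noncomputable def Qs (M : ℕ) (σ τ : Fin M → Fin 2) : ℝ :=
  ∑ k : Fin M, ∑ l : Fin M,
    (2 : ℝ) ^ ((l : ℕ) + 1) / (2 : ℝ) ^ ((k : ℕ) + 1) * ((σ k : ℕ) : ℝ) * ((τ l : ℕ) : ℝ)

/-- The truncated binary expansion `y_{≤M}`. -/
noncomputable def ys (M : ℕ) (τ : Fin M → Fin 2) : ℝ :=
  ∑ l : Fin M, (2 : ℝ) ^ ((l : ℕ) + 1) / (2 : ℝ) ^ (M + 1) * ((τ l : ℕ) : ℝ)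

lemma FmQ_eq (K M : ℕ) (α : Fin (K + 1)) (σ τ : Fin M → Fin 2) :
    FmQ K M α σ τ = ep (Qs M σ τ) * ep (2 * (ys M τ * cheb K α)) := by
  unfold FmQ ep Qs ys
  congr 1
  congr 1
  push_cast
  ring

lemma Acore_eq (K : ℕ) (α β : Fin (K + 1)) (σ τ : Fin 2) :
    Acore K α β σ τ = ((chebP K α ((((σ : ℕ) : ℝ) + cheb K β) / 2) : ℝ) : ℂ) *
      ep ((((σ : ℕ) : ℝ) + cheb K β) * ((τ : ℕ) : ℝ)) := by
  unfold Acore ep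
  congr 1
  congr 1
  push_cast
  ring

lemma Acore_abs (K : ℕ) (α β : Fin (K + 1)) (σ τ : Fin 2) :
    ‖Acore K α β σ τ‖ = |chebP K α ((((σ : ℕ) : ℝ) + cheb K β) / 2)| := by
  rw [Acore_eq, norm_mul, ep_abs, Complex.norm_real, Real.norm_eq_abs, mul_one]

lemma geo_pow (M : ℕ) : ∑ l ∈ Finset.range M, (2:ℝ)^(l+1) ≤ 2^(M+1) := by
  induction M with
  | zero => norm_num
  | succ n ih =>
      rw [Finset.sum_range_succ]
      have h : (2:ℝ)^(n+1+1) = 2^(n+1) + 2^(n+1) := by ring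
      linarith

lemma ys_mem (M : ℕ) (τ : Fin M → Fin 2) : ys M τ ∈ Set.Icc (0:ℝ) 1 := by
  unfold ys
  constructor
  · apply Finset.sum_nonneg; intro l _; positivity
  · calc ∑ l : Fin M, (2 : ℝ) ^ ((l : ℕ) + 1) / (2 : ℝ) ^ (M + 1) * ((τ l : ℕ) : ℝ)
        ≤ ∑ l : Fin M, (2 : ℝ) ^ ((l : ℕ) + 1) / (2 : ℝ) ^ (M + 1) := by
          apply Finset.sum_le_sum; intro l _
          have h1 : ((τ l : ℕ) : ℝ) ≤ 1 := by
            have := Nat.lt_succ_iff.mp (τ l).is_lt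
            exact_mod_cast this
          exact mul_le_of_le_one_right (by positivity) h1
      _ ≤ 1 := by
          rw [← Finset.sum_div]
          rw [div_le_one (by positivity)]
          have : ∑ l : Fin M, (2:ℝ) ^ ((l:ℕ)+1) = ∑ l ∈ Finset.range M, (2:ℝ)^(l+1) := by
            rw [Finset.sum_range fun l => (2:ℝ)^(l+1)]
          rw [this]
          exact geo_pow M

lemma ys_succ (M : ℕ) (τ : Fin (M+1) → Fin 2) :
    ys (M+1) τ = (ys M (fun i => τ i.castSucc) + ((τ (Fin.last M) : ℕ) : ℝ)) / 2 := by
  unfold ys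
  rw [Fin.sum_univ_castSucc]
  simp only [Fin.coe_castSucc, Fin.val_last]
  rw [add_div, Finset.sum_div]
  congr 1
  · apply Finset.sum_congr rfl
    intro l _
    rw [pow_succ]
    ring
  · rw [pow_succ]
    have h2 : (2 : ℝ) ^ (M+1) ≠ 0 := by positivity
    field_simp
    ring

lemma Qs_succ (M : ℕ) (σ τ : Fin (M+1) → Fin 2) :
    Qs (M+1) σ τ = Qs M (fun i => σ i.castSucc) (fun i => τ i.castSucc)
      + ((σ (Fin.last M) : ℕ) : ℝ) * ((τ (Fin.last M) : ℕ) : ℝ)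
      + ys M (fun i => τ i.castSucc) * ((σ (Fin.last M) : ℕ) : ℝ)
      + 2 * ((∑ k : Fin M, 2 ^ (M - 1 - (k : ℕ)) * ((σ k.castSucc : ℕ)) * ((τ (Fin.last M) : ℕ)) : ℕ) : ℝ) := by
  set s : ℝ := ((σ (Fin.last M) : ℕ) : ℝ) with hs
  set t : ℝ := ((τ (Fin.last M) : ℕ) : ℝ) with ht
  have hinner : ∀ k : Fin (M+1),
      (∑ l : Fin (M+1), (2 : ℝ) ^ ((l : ℕ) + 1) / (2 : ℝ) ^ ((k : ℕ) + 1) * ((σ k : ℕ) : ℝ) * ((τ l : ℕ) : ℝ))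
      = (∑ l : Fin M, (2 : ℝ) ^ ((l : ℕ) + 1) / (2 : ℝ) ^ ((k : ℕ) + 1) * ((σ k : ℕ) : ℝ) * ((τ l.castSucc : ℕ) : ℝ))
        + (2 : ℝ) ^ (M + 1) / (2 : ℝ) ^ ((k : ℕ) + 1) * ((σ k : ℕ) : ℝ) * t := by
    intro k
    rw [Fin.sum_univ_castSucc]
    simp [Fin.coe_castSucc, Fin.val_last, ht]
  unfold Qs
  simp only [hinner]
  rw [Finset.sum_add_distrib]
  rw [Fin.sum_univ_castSucc (f := fun k : Fin (M+1) => ∑ l : Fin M,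
      (2 : ℝ) ^ ((l : ℕ) + 1) / (2 : ℝ) ^ ((k : ℕ) + 1) * ((σ k : ℕ) : ℝ) * ((τ l.castSucc : ℕ) : ℝ))]
  rw [Fin.sum_univ_castSucc (f := fun k : Fin (M+1) =>
      (2 : ℝ) ^ (M + 1) / (2 : ℝ) ^ ((k : ℕ) + 1) * ((σ k : ℕ) : ℝ) * t)]
  simp only [Fin.coe_castSucc, Fin.val_last]
  have hB : ∑ k : Fin M, (2 : ℝ) ^ (M + 1) / (2 : ℝ) ^ ((k : ℕ) + 1) * ((σ k.castSucc : ℕ) : ℝ) * t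
      = 2 * ((∑ k : Fin M, 2 ^ (M - 1 - (k : ℕ)) * ((σ k.castSucc : ℕ)) * ((τ (Fin.last M) : ℕ)) : ℕ) : ℝ) := by
    push_cast
    rw [Finset.mul_sum]
    apply Finset.sum_congr rfl
    intro k _
    have hk : (k : ℕ) < M := k.is_lt
    have hMk : M + 1 = ((k : ℕ) + 1) + ((M - 1 - (k : ℕ)) + 1) := by omega
    rw [hMk, pow_add]
    have h2 : (2 : ℝ) ^ ((k : ℕ) + 1) ≠ 0 := by positivity
    field_simp
    ring
  have hC : ∑ l : Fin M, (2 : ℝ) ^ ((l : ℕ) + 1) / (2 : ℝ) ^ (M + 1) * ((σ (Fin.last M) : ℕ) : ℝ) * ((τ l.castSucc : ℕ) : ℝ)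
      = ys M (fun i => τ i.castSucc) * s := by
    unfold ys
    rw [Finset.sum_mul]
    apply Finset.sum_congr rfl
    intro l _
    rw [hs]
    ring
  have hD : (2 : ℝ) ^ (M + 1) / (2 : ℝ) ^ (M + 1) * s * t = s * t := by
    rw [div_self (by positivity : (2:ℝ)^(M+1) ≠ 0)]
    ring
  rw [hB, hC, hD]
  ring

lemma Eworst_ge' (K : ℕ) (x y : ℝ) (hx : x ∈ Set.Icc (0:ℝ) 1) (hy : y ∈ Set.Icc (0:ℝ) 1) :
    ‖ep (2 * (x * y)) -
        ∑ α : Fin (K + 1), ep (2 * (y * cheb K α)) * ((chebP K α x : ℝ) : ℂ)‖ ≤ Eworst K := by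
  have h := Eworst_ge K x y hx hy
  have e1 : Complex.exp (-2 * (Real.pi : ℂ) * Complex.I * (x : ℂ) * (y : ℂ)) = ep (2 * (x * y)) := by
    unfold ep; congr 1; push_cast; ring
  have e2 : ∀ α : Fin (K+1),
      Complex.exp (-2 * (Real.pi : ℂ) * Complex.I * (y : ℂ) * ((cheb K α : ℝ) : ℂ))
        = ep (2 * (y * cheb K α)) := by
    intro α; unfold ep; congr 1; push_cast; ring
  rw [← e1]
  have e2' : (∑ α : Fin (K + 1), ep (2 * (y * cheb K α)) * ((chebP K α x : ℝ) : ℂ))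
      = ∑ α : Fin (K + 1),
          Complex.exp (-2 * (Real.pi : ℂ) * Complex.I * (y : ℂ) * ((cheb K α : ℝ) : ℂ)) *
            ((chebP K α x : ℝ) : ℂ) :=
    Finset.sum_congr rfl fun α _ => by rw [e2]
  rw [e2']
  exact h

/-- The inductive error bound for the interpolative construction:
`|F̃_m^α(σ,τ) − F_m^α(σ,τ)| ≤ E_K · Σ_{p=0}^{m−2} Λ_K^p` for all `m ≥ 1` (the ℕ-index `m`
below corresponds to the paper's `m+1`, so the sum runs over `Finset.range m`). -/
theorem qft_mpo_inductive_error (K : ℕ) (hK : 1 ≤ K) (m : ℕ) (α : Fin (K + 1))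
    (σ τ : Fin (m + 1) → Fin 2) :
    ‖Ftilde K m α σ τ - FmQ K (m + 1) α σ τ‖ ≤
      Eworst K * ∑ p ∈ Finset.range m, Lambda K ^ p := by
  induction m generalizing α with
  | zero =>
      simp [Ftilde]
  | succ m ih =>
      set σ' : Fin (m+1) → Fin 2 := fun i => σ i.castSucc with hσ'
      set τ' : Fin (m+1) → Fin 2 := fun i => τ i.castSucc with hτ'
      set s : Fin 2 := σ (Fin.last (m+1)) with hsd
      set t : Fin 2 := τ (Fin.last (m+1)) with htd
      set c : ℝ := cheb K α with hc
      set x : ℝ := (((s : ℕ) : ℝ) + c) / 2 with hxd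
      set y : ℝ := ys (m+1) τ' with hyd
      have hx : x ∈ Set.Icc (0:ℝ) 1 := by
        have hc1 := cheb_mem K α
        have hs1 : ((s : ℕ) : ℝ) ≤ 1 := by
          have := Nat.lt_succ_iff.mp s.is_lt; exact_mod_cast this
        have hs0 : (0:ℝ) ≤ ((s : ℕ) : ℝ) := Nat.cast_nonneg _
        rw [hxd]
        constructor
        · have := hc1.1; linarith
        · have := hc1.2; linarith
      have hy : y ∈ Set.Icc (0:ℝ) 1 := ys_mem (m+1) τ'
      have hF : Ftilde K (m+1) α σ τ
          = ∑ γ : Fin (K+1), Ftilde K m γ σ' τ' * Acore K γ α s t := rfl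
      set G : ℂ := ∑ γ : Fin (K+1), FmQ K (m+1) γ σ' τ' * Acore K γ α s t with hGd
      have hESnn : 0 ≤ Eworst K * ∑ p ∈ Finset.range m, Lambda K ^ p := by
        apply mul_nonneg (Eworst_nonneg K)
        apply Finset.sum_nonneg
        intro p _
        exact pow_nonneg (Lambda_nonneg K) p
      -- first bound
      have hb1 : ‖Ftilde K (m+1) α σ τ - G‖
          ≤ (Eworst K * ∑ p ∈ Finset.range m, Lambda K ^ p) * Lambda K := by
        have hdiff : Ftilde K (m+1) α σ τ - G
            = ∑ γ : Fin (K+1), (Ftilde K m γ σ' τ' - FmQ K (m+1) γ σ' τ') * Acore K γ α s t := by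
          rw [hF, hGd, ← Finset.sum_sub_distrib]
          apply Finset.sum_congr rfl
          intro γ _
          ring
        rw [hdiff]
        calc ‖∑ γ : Fin (K+1), (Ftilde K m γ σ' τ' - FmQ K (m+1) γ σ' τ') * Acore K γ α s t‖
            ≤ ∑ γ : Fin (K+1), ‖(Ftilde K m γ σ' τ' - FmQ K (m+1) γ σ' τ') * Acore K γ α s t‖ :=
              norm_sum_le _ _
          _ ≤ ∑ γ : Fin (K+1), (Eworst K * ∑ p ∈ Finset.range m, Lambda K ^ p) * |chebP K γ x| := by
              apply Finset.sum_le_sum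
              intro γ _
              rw [norm_mul, Acore_abs]
              exact mul_le_mul_of_nonneg_right (ih γ σ' τ') (abs_nonneg _)
          _ = (Eworst K * ∑ p ∈ Finset.range m, Lambda K ^ p) * ∑ γ : Fin (K+1), |chebP K γ x| :=
              (Finset.mul_sum _ _ _).symm
          _ ≤ (Eworst K * ∑ p ∈ Finset.range m, Lambda K ^ p) * Lambda K :=
              mul_le_mul_of_nonneg_left (Lambda_ge K x hx) hESnn
      -- second bound
      have hb2 : ‖G - FmQ K (m+2) α σ τ‖ ≤ Eworst K := by
        have hG2 : G = ep (Qs (m+1) σ' τ') * ep (((( s : ℕ) : ℝ) + c) * ((t : ℕ) : ℝ)) *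
            (∑ γ : Fin (K+1), ep (2 * (y * cheb K γ)) * ((chebP K γ x : ℝ) : ℂ)) := by
          rw [hGd, Finset.mul_sum]
          apply Finset.sum_congr rfl
          intro γ _
          rw [FmQ_eq, Acore_eq]
          rw [hyd, hxd, hc]
          ring
        obtain n := (∑ k : Fin (m+1), 2 ^ (m + 1 - 1 - (k : ℕ)) * ((σ k.castSucc : ℕ)) * ((τ (Fin.last (m+1)) : ℕ)) : ℕ)
        have key : Qs (m+2) σ τ + 2 * (ys (m+2) τ * c)
            = Qs (m+1) σ' τ' + ((((s : ℕ) : ℝ) + c) * ((t : ℕ) : ℝ) + (2 * (x * y) +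
              2 * ((∑ k : Fin (m+1), 2 ^ (m + 1 - 1 - (k : ℕ)) * ((σ k.castSucc : ℕ)) * ((τ (Fin.last (m+1)) : ℕ)) : ℕ) : ℝ))) := by
          rw [Qs_succ (m+1) σ τ, ys_succ (m+1) τ]
          rw [hxd, hyd, hsd, htd, hσ', hτ']
          ring
        have hFm2 : FmQ K (m+2) α σ τ
            = ep (Qs (m+1) σ' τ') * ep ((((s : ℕ) : ℝ) + c) * ((t : ℕ) : ℝ)) * ep (2 * (x * y)) := by
          rw [FmQ_eq, ← ep_add, ← hc, key, ep_add, ep_add, ep_add, ep_nat]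
          ring
        rw [hG2, hFm2]
        have : ep (Qs (m+1) σ' τ') * ep ((((s : ℕ) : ℝ) + c) * ((t : ℕ) : ℝ)) *
              (∑ γ : Fin (K+1), ep (2 * (y * cheb K γ)) * ((chebP K γ x : ℝ) : ℂ)) -
            ep (Qs (m+1) σ' τ') * ep ((((s : ℕ) : ℝ) + c) * ((t : ℕ) : ℝ)) * ep (2 * (x * y))
            = ep (Qs (m+1) σ' τ') * ep ((((s : ℕ) : ℝ) + c) * ((t : ℕ) : ℝ)) *
              ((∑ γ : Fin (K+1), ep (2 * (y * cheb K γ)) * ((chebP K γ x : ℝ) : ℂ)) - ep (2 * (x * y))) := by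
          ring
        rw [this, norm_mul, norm_mul, ep_abs, ep_abs, one_mul, one_mul]
        rw [← norm_neg, neg_sub]
        exact Eworst_ge' K x y hx hy
      -- combine
      have htri : ‖Ftilde K (m+1) α σ τ - FmQ K (m+2) α σ τ‖
          ≤ ‖Ftilde K (m+1) α σ τ - G‖ + ‖G - FmQ K (m+2) α σ τ‖ :=
        by have := norm_add_le (Ftilde K (m+1) α σ τ - G) (G - FmQ K (m+2) α σ τ); rwa [sub_add_sub_cancel] at this
      have hgeom : ∑ p ∈ Finset.range (m+1), Lambda K ^ p
          = Lambda K * ∑ p ∈ Finset.range m, Lambda K ^ p + 1 := geom_sum_succ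
      calc ‖Ftilde K (m+1) α σ τ - FmQ K (m+1+1) α σ τ‖
          ≤ (Eworst K * ∑ p ∈ Finset.range m, Lambda K ^ p) * Lambda K + Eworst K := by
            have := le_trans htri (add_le_add hb1 hb2)
            simpa using this
        _ = Eworst K * ∑ p ∈ Finset.range (m+1), Lambda K ^ p := by
            rw [hgeom]
            ring
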